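/- Let n ≥ 2, let x, y be vertices of Q_n with p(x) ≠ p(y), and let f be an edge of Q_n with f ≠ xy. Then Q_n has a Hamiltonian path from x to y that passes through the edge f. -/

import Mathlib

open SimpleGraph Finset
open scoped Classical

/-- The `n`-dimensional hypercube graph: vertices are `Fin n → Bool`,
adjacent iff they differ in exactly one coordinate. -/
def Q (n : ℕ) : SimpleGraph (Fin n → Bool) :=
  SimpleGraph.fromRel fun x y => (Finset.univ.filter fun i => x i ≠ y i).card = 1

/-- Parity of a vertex of the hypercube: sum of coordinates mod 2. -/
def qparity {n : ℕ} (x : Fin n → Bool) : ZMod 2 :=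
  ∑ i, if x i then 1 else 0

/-!
Induction on `n ≥ 2`; the case `n = 2` is checked exhaustively. The cube `Q (n + 1)` is the union
of two layers `layer c` (last coordinate `c`), each a copy of `Q n`, joined by the perfect
matching `layer c v ~ layer (!c) v`; after a permutation of the coordinates the prescribed edge
lies inside one layer. If `x` and `y` lie in different layers, join a Hamiltonian path of one layer
(through the prescribed edge, by induction) to a Hamiltonian path of the other one across a
matching edge. If they lie in the same layer, take a Hamiltonian `x`–`y` path in that layer and
replace one of its edges `uv` by a detour `u ~ u'`, a Hamiltonian `u'`–`v'` path of the other
layer, `v' ~ v`; the prescribed edge is kept either on the path or on the detour. The same two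
constructions first show that `Q n` is Hamiltonian laceable.
-/

namespace SimpleGraph

variable {V W : Type*} [DecidableEq V] [DecidableEq W] {G : SimpleGraph V} {H : SimpleGraph W}

lemma Walk.IsHamiltonian.reverse {x y : V} {p : G.Walk x y} (hp : p.IsHamiltonian) :
    p.reverse.IsHamiltonian := fun v => by
  rw [support_reverse, List.count_reverse]
  exact hp v

lemma Walk.IsPath.exists_eq_append_cons_ne {x y : V} {p : G.Walk x y} (hp : p.IsPath)
    (hlen : 2 ≤ p.length) (e : Sym2 V) :
    ∃ (u v : V) (q : G.Walk x u) (huv : G.Adj u v) (r : G.Walk v y),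
      p = q.append (cons huv r) ∧ s(u, v) ≠ e := by
  rcases p with _ | @⟨_, v₁, _, h₁, _ | @⟨_, v₂, _, h₂, r⟩⟩
  · simp at hlen
  · simp at hlen
  by_cases he : s(x, v₁) = e
  · refine ⟨_, _, Walk.cons h₁ Walk.nil, h₂, r, rfl, ?_⟩
    rw [← he, Ne, Sym2.eq_swap, Sym2.congr_left]
    rintro rfl
    simp at hp
  · exact ⟨_, _, Walk.nil, h₁, cons h₂ r, rfl, he⟩

lemma Iso.exists_isHamiltonian_of_map (φ : G ≃g H) {x y : V} {e : Sym2 V}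
    (h : ∃ p : H.Walk (φ x) (φ y), p.IsHamiltonian ∧ e.map φ ∈ p.edges) :
    ∃ p : G.Walk x y, p.IsHamiltonian ∧ e ∈ p.edges := by
  obtain ⟨p, hp, he⟩ := h
  refine ⟨(p.map φ.symm.toHom).copy (φ.symm_apply_apply x) (φ.symm_apply_apply y), ?_, ?_⟩
  · intro v
    rw [Walk.support_copy]
    exact (hp.map _ φ.symm.bijective) v
  · rw [Walk.edges_copy, Walk.edges_map]
    exact List.mem_map.mpr ⟨_, he, by simp [Sym2.map_map]⟩

end SimpleGraph

section hammingDist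

variable {ι β : Type*} [DecidableEq β]

lemma hammingDist_snoc {n : ℕ} (u v : Fin n → β) (c d : β) :
    hammingDist (Fin.snoc u c : Fin (n + 1) → β) (Fin.snoc v d) =
      hammingDist u v + if c = d then 0 else 1 := by
  simp only [hammingDist, Finset.card_filter, Fin.sum_univ_castSucc, Fin.snoc_castSucc,
    Fin.snoc_last]
  by_cases c = d <;> simp [*]

lemma hammingDist_comp_perm [Fintype ι] (σ : Equiv.Perm ι) (u v : ι → β) :
    hammingDist (u ∘ σ) (v ∘ σ) = hammingDist u v := by
  simp only [hammingDist, Finset.card_filter, Function.comp_apply]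
  exact Equiv.sum_comp σ fun i => if u i ≠ v i then 1 else 0

end hammingDist

namespace Q

variable {n : ℕ}

open Walk

lemma adj_iff {x y : Fin n → Bool} : (Q n).Adj x y ↔ hammingDist x y = 1 := by
  change x ≠ y ∧ (hammingDist x y = 1 ∨ hammingDist y x = 1) ↔ _
  rw [hammingDist_comm y x, or_self, and_iff_right_iff_imp]
  intro h
  exact hammingDist_pos.mp (by omega)

instance : DecidableRel (Q n).Adj := fun _ _ => decidable_of_iff _ adj_iff.symm

lemma qparity_add_qparity (x y : Fin n → Bool) :
    qparity x + qparity y = (hammingDist x y : ZMod 2) := by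
  rw [qparity, qparity, ← Finset.sum_add_distrib, hammingDist, Finset.card_filter, Nat.cast_sum]
  refine Finset.sum_congr rfl fun i _ => ?_
  cases x i <;> cases y i <;> decide

lemma qparity_ne_of_adj {x y : Fin n → Bool} (h : (Q n).Adj x y) : qparity x ≠ qparity y := by
  intro hxy
  have := qparity_add_qparity x y
  rw [adj_iff.mp h, hxy, CharTwo.add_self_eq_zero] at this
  exact zero_ne_one this

def flipAt (i : Fin n) (x : Fin n → Bool) : Fin n → Bool := Function.update x i (!x i)

lemma flipAt_apply_ne {i j : Fin n} (h : j ≠ i) (x : Fin n → Bool) : flipAt i x j = x j :=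
  Function.update_of_ne h _ _

lemma hammingDist_flipAt (i : Fin n) (x : Fin n → Bool) : hammingDist x (flipAt i x) = 1 := by
  rw [hammingDist, Finset.card_eq_one]
  refine ⟨i, Finset.ext fun j => ?_⟩
  simp only [Finset.mem_filter, Finset.mem_univ, true_and, Finset.mem_singleton]
  by_cases hj : j = i
  · simp [hj, flipAt]
  · simp [hj, flipAt_apply_ne hj]

lemma adj_flipAt (i : Fin n) (x : Fin n → Bool) : (Q n).Adj x (flipAt i x) :=
  adj_iff.mpr (hammingDist_flipAt i x)

lemma exists_eq_flipAt_of_adj {x y : Fin n → Bool} (h : (Q n).Adj x y) : ∃ i, y = flipAt i x := by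
  obtain ⟨i, hi⟩ := Finset.card_eq_one.mp (adj_iff.mp h)
  refine ⟨i, funext fun j => ?_⟩
  have hj := Finset.ext_iff.mp hi j
  simp only [Finset.mem_filter, Finset.mem_univ, true_and, Finset.mem_singleton] at hj
  by_cases hji : j = i
  · subst hji
    rw [flipAt, Function.update_self]
    revert hj
    cases x j <;> cases y j <;> simp
  · rw [flipAt_apply_ne hji]
    simpa [hji, eq_comm] using hj

lemma qparity_flipAt (i : Fin n) (x : Fin n → Bool) : qparity (flipAt i x) = qparity x + 1 := by
  have h := qparity_add_qparity x (flipAt i x)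
  rw [hammingDist_flipAt, Nat.cast_one] at h
  rw [← h, ← add_assoc, CharTwo.add_self_eq_zero, zero_add]

lemma flipAt_left_injective (x : Fin n → Bool) : Function.Injective (flipAt · x) := by
  intro i j h
  by_contra hij
  have := congrFun h i
  simp [flipAt, Function.update_of_ne hij] at this

lemma exists_qparity_eq_add_one_sym2_ne (hn : 2 ≤ n) (x : Fin n → Bool) (e : Sym2 (Fin n → Bool)) :
    ∃ w, qparity w = qparity x + 1 ∧ s(x, w) ≠ e := by
  by_cases h : s(x, flipAt ⟨0, by omega⟩ x) = e
  · refine ⟨flipAt ⟨1, by omega⟩ x, qparity_flipAt _ x, fun h' => ?_⟩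
    have := flipAt_left_injective x (Sym2.congr_right.mp (h'.trans h.symm))
    simp [Fin.ext_iff] at this
  · exact ⟨_, qparity_flipAt _ x, h⟩

def layer (c : Bool) : Q n ↪g Q (n + 1) where
  toFun v := Fin.snoc (α := fun _ => Bool) v c
  inj' _ _ h := (Fin.snoc_injective2 h).1
  map_rel_iff' {u v} := by
    change (Q (n + 1)).Adj (Fin.snoc u c) (Fin.snoc v c) ↔ _
    simp [adj_iff, hammingDist_snoc]

lemma layer_apply (c : Bool) (v : Fin n → Bool) : layer c v = Fin.snoc v c := rfl

lemma layer_ne_layer {c d : Bool} (hcd : c ≠ d) (u v : Fin n → Bool) : layer c u ≠ layer d v :=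
  fun h => hcd (Fin.snoc_injective2 (α := fun _ => Bool) h).2

lemma adj_layer_layer {c d : Bool} (hcd : c ≠ d) (v : Fin n → Bool) :
    (Q (n + 1)).Adj (layer c v) (layer d v) := by
  simp [adj_iff, layer_apply, hammingDist_snoc, hcd]

lemma exists_layer (w : Fin (n + 1) → Bool) : ∃ c v, w = layer c v :=
  ⟨w (Fin.last n), Fin.init w, (Fin.snoc_init_self w).symm⟩

lemma qparity_layer (c : Bool) (v : Fin n → Bool) :
    qparity (layer c v) = qparity v + if c then 1 else 0 := by
  rw [qparity, qparity, Fin.sum_univ_castSucc]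
  simp [layer_apply]

lemma qparity_layer_ne_iff {c : Bool} {x y : Fin n → Bool} :
    qparity (layer c x) ≠ qparity (layer c y) ↔ qparity x ≠ qparity y := by
  simp [qparity_layer]

lemma qparity_layer_ne_layer_iff {c d : Bool} (hcd : c ≠ d) {x y : Fin n → Bool} :
    qparity (layer c x) ≠ qparity (layer d y) ↔ qparity x = qparity y := by
  rw [qparity_layer, qparity_layer]
  generalize qparity x = a
  generalize qparity y = b
  revert a b
  cases c <;> cases d <;> simp at hcd <;> decide

lemma flipAt_castSucc_layer (i : Fin n) (c : Bool) (v : Fin n → Bool) :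
    flipAt i.castSucc (layer c v) = layer c (flipAt i v) := by
  funext j
  refine Fin.lastCases ?_ (fun k => ?_) j
  · simp [layer_apply, flipAt, Function.update_of_ne (Fin.castSucc_ne_last i).symm]
  · by_cases hk : k = i
    · subst hk; simp [layer_apply, flipAt]
    · simp [layer_apply, flipAt, Function.update_of_ne hk,
        Function.update_of_ne (Fin.castSucc_injective _ |>.ne hk)]

def permIso (σ : Equiv.Perm (Fin n)) : Q n ≃g Q n where
  toEquiv := σ.arrowCongr (Equiv.refl Bool)
  map_rel_iff' {u v} := by
    change (Q n).Adj (u ∘ σ.symm) (v ∘ σ.symm) ↔ _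
    rw [adj_iff, adj_iff, hammingDist_comp_perm]

lemma permIso_apply (σ : Equiv.Perm (Fin n)) (x : Fin n → Bool) : permIso σ x = x ∘ σ.symm := rfl

lemma qparity_permIso (σ : Equiv.Perm (Fin n)) (x : Fin n → Bool) :
    qparity (permIso σ x) = qparity x :=
  Equiv.sum_comp σ.symm fun i => if x i then 1 else 0

lemma permIso_flipAt (σ : Equiv.Perm (Fin n)) (i : Fin n) (x : Fin n → Bool) :
    permIso σ (flipAt i x) = flipAt (σ i) (permIso σ x) := by
  funext j
  by_cases hj : j = σ i
  · subst hj; simp [permIso_apply, flipAt]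
  · have : σ.symm j ≠ i := fun h => hj (σ.symm_apply_eq.mp h)
    simp [permIso_apply, flipAt_apply_ne hj, flipAt_apply_ne this]

lemma exists_permIso_map_eq_layer (hn : 0 < n) {e : Sym2 (Fin (n + 1) → Bool)}
    (he : e ∈ (Q (n + 1)).edgeSet) :
    ∃ σ c a b, (Q n).Adj a b ∧ e.map (permIso σ) = s(layer c a, layer c b) := by
  induction e using Sym2.ind with | _ a b => ?_
  obtain ⟨j, rfl⟩ := exists_eq_flipAt_of_adj (show (Q (n + 1)).Adj a b from he)
  let i : Fin n := ⟨0, hn⟩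
  obtain ⟨c, a₀, ha⟩ := exists_layer (permIso (Equiv.swap j i.castSucc) a)
  refine ⟨Equiv.swap j i.castSucc, c, a₀, flipAt i a₀, adj_flipAt i a₀, ?_⟩
  rw [Sym2.map_mk, permIso_flipAt, Equiv.swap_apply_left, ha, flipAt_castSucc_layer]

lemma count_map_layer_append_map_layer {c d : Bool} (hcd : c ≠ d) {L₀ L₁ : List (Fin n → Bool)}
    (h₀ : ∀ v, L₀.count v = 1) (h₁ : ∀ v, L₁.count v = 1) (w : Fin (n + 1) → Bool) :
    (L₀.map (layer c) ++ L₁.map (layer d)).count w = 1 := by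
  obtain ⟨e, v, rfl⟩ := exists_layer w
  have hnot {c' d' : Bool} (h : c' ≠ d') (L : List (Fin n → Bool)) :
      layer c' v ∉ L.map (layer d') := by
    simpa using fun u _ => layer_ne_layer h.symm u v
  rw [List.count_append]
  obtain rfl | rfl : e = c ∨ e = d := by cases c <;> cases d <;> cases e <;> simp_all
  · rw [List.count_map_of_injective _ _ (layer _).injective,
      List.count_eq_zero.mpr (hnot hcd L₁), h₀]
  · rw [List.count_map_of_injective _ _ (layer _).injective,
      List.count_eq_zero.mpr (hnot hcd.symm L₀), h₁]

def join {c d : Bool} (hcd : c ≠ d) {x w y : Fin n → Bool} (p : (Q n).Walk x w)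
    (q : (Q n).Walk w y) : (Q (n + 1)).Walk (layer c x) (layer d y) :=
  (p.map (layer c).toHom).append (cons (adj_layer_layer hcd w) (q.map (layer d).toHom))

lemma support_join {c d : Bool} (hcd : c ≠ d) {x w y : Fin n → Bool} (p : (Q n).Walk x w)
    (q : (Q n).Walk w y) :
    (join hcd p q).support = p.support.map (layer c) ++ q.support.map (layer d) := by
  simp [join, support_append, Walk.support_map]

lemma isHamiltonian_join {c d : Bool} (hcd : c ≠ d) {x w y : Fin n → Bool} {p : (Q n).Walk x w}
    {q : (Q n).Walk w y} (hp : p.IsHamiltonian) (hq : q.IsHamiltonian) :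
    (join hcd p q).IsHamiltonian := by
  intro v
  rw [support_join]
  exact count_map_layer_append_map_layer hcd hp hq v

lemma map_mem_edges_join_left {c d : Bool} (hcd : c ≠ d) {x w y : Fin n → Bool}
    {p : (Q n).Walk x w} (q : (Q n).Walk w y) {e : Sym2 (Fin n → Bool)} (he : e ∈ p.edges) :
    e.map (layer c) ∈ (join hcd p q).edges := by
  rw [join, edges_append, edges_map]
  exact List.mem_append_left _ (List.mem_map_of_mem he)

lemma map_mem_edges_join_right {c d : Bool} (hcd : c ≠ d) {x w y : Fin n → Bool}
    (p : (Q n).Walk x w) {q : (Q n).Walk w y} {e : Sym2 (Fin n → Bool)} (he : e ∈ q.edges) :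
    e.map (layer d) ∈ (join hcd p q).edges := by
  rw [join, edges_append, edges_cons, edges_map, edges_map]
  exact List.mem_append_right _ (List.mem_cons_of_mem _ (List.mem_map_of_mem he))

def detour {c d : Bool} (hcd : c ≠ d) {x u v y : Fin n → Bool} (p : (Q n).Walk x u)
    (q : (Q n).Walk u v) (r : (Q n).Walk v y) : (Q (n + 1)).Walk (layer c x) (layer c y) :=
  (p.map (layer c).toHom).append (cons (adj_layer_layer hcd u) (join hcd.symm q r))

lemma map_mem_edges_detour_middle {c d : Bool} (hcd : c ≠ d) {x u v y : Fin n → Bool}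
    (p : (Q n).Walk x u) {q : (Q n).Walk u v} (r : (Q n).Walk v y) {e : Sym2 (Fin n → Bool)}
    (he : e ∈ q.edges) : e.map (layer d) ∈ (detour hcd p q r).edges := by
  rw [detour, edges_append, edges_cons]
  exact List.mem_append_right _ (List.mem_cons_of_mem _ (map_mem_edges_join_left _ r he))

lemma map_mem_edges_detour_of_ne {c d : Bool} (hcd : c ≠ d) {x u v y : Fin n → Bool}
    {p : (Q n).Walk x u} {huv : (Q n).Adj u v} {r : (Q n).Walk v y} (q : (Q n).Walk u v)
    {e : Sym2 (Fin n → Bool)} (he : e ∈ (p.append (cons huv r)).edges) (hne : e ≠ s(u, v)) :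
    e.map (layer c) ∈ (detour hcd p q r).edges := by
  rw [edges_append, edges_cons, List.mem_append, List.mem_cons] at he
  rw [detour, edges_append, edges_cons, edges_map]
  rcases he with he | he | he
  · exact List.mem_append_left _ (List.mem_map_of_mem he)
  · exact absurd he hne
  · exact List.mem_append_right _ (List.mem_cons_of_mem _ (map_mem_edges_join_right _ q he))

lemma isHamiltonian_detour {c d : Bool} (hcd : c ≠ d) {x u v y : Fin n → Bool}
    {p : (Q n).Walk x u} {huv : (Q n).Adj u v} {r : (Q n).Walk v y} {q : (Q n).Walk u v}
    (hpr : (p.append (cons huv r)).IsHamiltonian) (hq : q.IsHamiltonian) :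
    (detour hcd p q r).IsHamiltonian := by
  intro w
  have hperm : List.Perm (detour hcd p q r).support
      ((p.support ++ r.support).map (layer c) ++ q.support.map (layer d)) := by
    simp only [detour, support_append, support_cons, List.tail_cons, support_join, Walk.support_map,
      List.map_append, List.append_assoc]
    exact List.perm_append_comm.append_left _
  rw [hperm.count_eq]
  refine count_map_layer_append_map_layer hcd (fun v => ?_) hq w
  simpa [support_append] using hpr v

theorem exists_isHamiltonian {x y : Fin n → Bool} (hxy : qparity x ≠ qparity y) :
    ∃ p : (Q n).Walk x y, p.IsHamiltonian := by
  induction n with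
  | zero => exact absurd (congrArg qparity (Subsingleton.elim x y)) hxy
  | succ n ih =>
    obtain ⟨c, x, rfl⟩ := exists_layer x
    obtain ⟨d, y, rfl⟩ := exists_layer y
    by_cases hcd : c = d
    · subst hcd
      obtain ⟨p, hp⟩ := ih (qparity_layer_ne_iff.mp hxy)
      rcases p with _ | @⟨_, v, _, hxv, r⟩
      · exact absurd rfl hxy
      obtain ⟨q, hq⟩ := ih (qparity_ne_of_adj hxv)
      exact ⟨detour (Bool.self_ne_not c) nil q r, isHamiltonian_detour _ hp hq⟩
    · obtain ⟨w, ⟨p, hp⟩, ⟨q, hq⟩⟩ :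
          ∃ w, (∃ p : (Q n).Walk x w, p.IsHamiltonian) ∧ ∃ q : (Q n).Walk w y, q.IsHamiltonian := by
        rcases n with _ | n
        · obtain rfl := Subsingleton.elim x y
          exact ⟨x, ⟨nil, .of_subsingleton⟩, ⟨nil, .of_subsingleton⟩⟩
        · have hw := qparity_flipAt 0 x
          have hxy := (qparity_layer_ne_layer_iff hcd).mp hxy
          refine ⟨flipAt 0 x, ih ?_, ih ?_⟩ <;> simp [hw, hxy]
      exact ⟨join hcd p q, isHamiltonian_join hcd hp hq⟩

def PrescribedEdgeLaceable (n : ℕ) : Prop :=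
  ∀ x y : Fin n → Bool, qparity x ≠ qparity y → ∀ f ∈ (Q n).edgeSet, f ≠ s(x, y) →
    ∃ p : (Q n).Walk x y, p.IsHamiltonian ∧ f ∈ p.edges

lemma exists_spanning_path_two : ∀ x y a b : Fin 2 → Bool, (Q 2).Adj a b →
    qparity x ≠ qparity y → s(a, b) ≠ s(x, y) →
    ∃ z w, (Q 2).Adj x z ∧ (Q 2).Adj z w ∧ (Q 2).Adj w y ∧ (∀ v, [x, z, w, y].count v = 1) ∧
      s(a, b) ∈ [s(x, z), s(z, w), s(w, y)] := by
  decide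

lemma prescribedEdgeLaceable_two : PrescribedEdgeLaceable 2 := by
  intro x y hxy f hf hfxy
  induction f using Sym2.ind with | _ a b => ?_
  obtain ⟨z, w, hxz, hzw, hwy, hcount, hab⟩ := exists_spanning_path_two x y a b hf hxy hfxy
  exact ⟨cons hxz (cons hzw (cons hwy nil)), hcount, by simpa using hab⟩

lemma two_le_length_of_isHamiltonian (hn : 2 ≤ n) {x y : Fin n → Bool} {p : (Q n).Walk x y}
    (hp : p.IsHamiltonian) : 2 ≤ p.length := by
  rw [hp.length_eq, Fintype.card_fun, Fintype.card_bool, Fintype.card_fin]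
  have := Nat.pow_le_pow_right two_pos hn
  omega

lemma exists_walk_same_layer (hn : 2 ≤ n) (IH : PrescribedEdgeLaceable n) {c : Bool}
    {x y a b : Fin n → Bool} (hxy : qparity x ≠ qparity y) (hab : (Q n).Adj a b)
    (hne : s(layer c a, layer c b) ≠ s(layer c x, layer c y)) :
    ∃ p : (Q (n + 1)).Walk (layer c x) (layer c y), p.IsHamiltonian ∧
      s(layer c a, layer c b) ∈ p.edges := by
  obtain ⟨p, hp, habp⟩ :=
    IH x y hxy s(a, b) hab fun h => hne (by simpa using congrArg (Sym2.map (layer c)) h)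
  obtain ⟨u, v, q, huv, r, rfl, hne'⟩ :=
    hp.isPath.exists_eq_append_cons_ne (two_le_length_of_isHamiltonian hn hp) s(a, b)
  obtain ⟨t, ht⟩ := exists_isHamiltonian (qparity_ne_of_adj huv)
  refine ⟨detour (Bool.self_ne_not c) q t r, isHamiltonian_detour _ hp ht, ?_⟩
  simpa using map_mem_edges_detour_of_ne _ t habp hne'.symm

lemma exists_walk_other_layer (hn : 2 ≤ n) (IH : PrescribedEdgeLaceable n) {c d : Bool}
    (hcd : c ≠ d) {x y a b : Fin n → Bool} (hxy : qparity x ≠ qparity y) (hab : (Q n).Adj a b) :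
    ∃ p : (Q (n + 1)).Walk (layer d x) (layer d y), p.IsHamiltonian ∧
      s(layer c a, layer c b) ∈ p.edges := by
  obtain ⟨p, hp⟩ := exists_isHamiltonian hxy
  obtain ⟨u, v, q, huv, r, rfl, hne⟩ :=
    hp.isPath.exists_eq_append_cons_ne (two_le_length_of_isHamiltonian hn hp) s(a, b)
  obtain ⟨t, ht, habt⟩ := IH u v (qparity_ne_of_adj huv) s(a, b) hab hne.symm
  refine ⟨detour hcd.symm q t r, isHamiltonian_detour _ hp ht, ?_⟩
  simpa using map_mem_edges_detour_middle hcd.symm q r habt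

lemma exists_walk_across_layers (hn : 2 ≤ n) (IH : PrescribedEdgeLaceable n) {c d : Bool}
    (hcd : c ≠ d) {x y a b : Fin n → Bool} (hxy : qparity x = qparity y) (hab : (Q n).Adj a b) :
    ∃ p : (Q (n + 1)).Walk (layer c x) (layer d y), p.IsHamiltonian ∧
      s(layer c a, layer c b) ∈ p.edges := by
  obtain ⟨w, hw, hne⟩ := exists_qparity_eq_add_one_sym2_ne hn x s(a, b)
  obtain ⟨p, hp, habp⟩ := IH x w (by simp [hw]) s(a, b) hab hne.symm
  obtain ⟨q, hq⟩ := exists_isHamiltonian (show qparity w ≠ qparity y by simp [hw, hxy])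
  refine ⟨join hcd p q, isHamiltonian_join hcd hp hq, ?_⟩
  simpa using map_mem_edges_join_left hcd q habp

lemma exists_walk_of_edge_in_layer (hn : 2 ≤ n) (IH : PrescribedEdgeLaceable n) {c : Bool}
    {a b : Fin n → Bool} (hab : (Q n).Adj a b) {x y : Fin (n + 1) → Bool}
    (hxy : qparity x ≠ qparity y) (hne : s(layer c a, layer c b) ≠ s(x, y)) :
    ∃ p : (Q (n + 1)).Walk x y, p.IsHamiltonian ∧ s(layer c a, layer c b) ∈ p.edges := by
  have hc := Bool.self_ne_not c
  obtain ⟨d, x, rfl⟩ := exists_layer x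
  obtain ⟨d', y, rfl⟩ := exists_layer y
  obtain rfl | rfl : d = c ∨ d = !c := by cases c <;> cases d <;> simp
  · obtain rfl | rfl : d' = d ∨ d' = !d := by cases d <;> cases d' <;> simp
    · exact exists_walk_same_layer hn IH (qparity_layer_ne_iff.mp hxy) hab hne
    · exact exists_walk_across_layers hn IH hc ((qparity_layer_ne_layer_iff hc).mp hxy) hab
  · obtain rfl | rfl : d' = c ∨ d' = !c := by cases c <;> cases d' <;> simp
    · obtain ⟨p, hp, hmem⟩ :=
        exists_walk_across_layers hn IH hc ((qparity_layer_ne_layer_iff hc).mp hxy.symm) hab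
      exact ⟨p.reverse, hp.reverse, by simpa using hmem⟩
    · exact exists_walk_other_layer hn IH hc (qparity_layer_ne_iff.mp hxy) hab

theorem prescribedEdgeLaceable_succ (hn : 2 ≤ n) (IH : PrescribedEdgeLaceable n) :
    PrescribedEdgeLaceable (n + 1) := by
  intro x y hxy f hf hfxy
  obtain ⟨σ, c, a, b, hab, hσ⟩ := exists_permIso_map_eq_layer (by omega) hf
  refine (permIso σ).exists_isHamiltonian_of_map ?_
  rw [hσ]
  refine exists_walk_of_edge_in_layer hn IH hab (by simpa [qparity_permIso] using hxy) ?_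
  rw [← hσ, ← Sym2.map_mk]
  exact (Sym2.map.injective (permIso σ).injective).ne hfxy

end Q

theorem hamiltonian_path_through_prescribed_edge (n : ℕ) (hn : 2 ≤ n)
    (x y : Fin n → Bool) (hxy : qparity x ≠ qparity y)
    (f : Sym2 (Fin n → Bool)) (hf : f ∈ (Q n).edgeSet) (hfxy : f ≠ s(x, y)) :
    ∃ p : (Q n).Walk x y, p.IsHamiltonian ∧ f ∈ p.edges :=
  Nat.le_induction Q.prescribedEdgeLaceable_two (fun _ => Q.prescribedEdgeLaceable_succ) n hn
    x y hxy f hf hfxy
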